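/- Let Q be a symmetric positive semidefinite real n×n matrix and, for i = 1,…,n, let rᵢ, sᵢ, tᵢ ∈ ℝⁿ be vectors which are subunit with respect to Q. Let H = (H₁,…,Hₙ), G = (G₁,…,Gₙ), g = (g₁,…,gₙ) ∈ ℝⁿ and F, f ∈ ℝ. Define A : ℝ×ℝⁿ → ℝⁿ and B : ℝ×ℝⁿ → ℝ by A(z,ξ) = Qξ − z·Σᵢ Gᵢ sᵢ + Σᵢ gᵢ tᵢ and B(z,ξ) = f − Σᵢ Hᵢ⟨rᵢ,ξ⟩ − Fz. Then there exists Ã : ℝ×ℝⁿ → ℝⁿ such that for all (z,ξ) ∈ ℝ×ℝⁿ: A(z,ξ) = √Q·Ã(z,ξ); ξ·A(z,ξ) ≥ (1/2)|√Q·ξ|² − 4n|G|²z² − 4n|g|²; |Ã(z,ξ)| ≤ |√Q·ξ| + √n|G||z| + √n|g|; and |B(z,ξ)| ≤ √n|H||√Q·ξ| + |F||z| + |f|. In particular, the linear equation div(Q(x)∇u) + HRu + S′Gu + Fu = f + T′g, with R, S, T collections of subunit vector fields, satisfies the structural conditions with p = γ = ψ = δ = 2 relative to Q. -/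

import Mathlib

/-!
Write `S = √Q`, so that `⟨Qξ, ξ⟩ = |Sξ|²` and `v` is subunit iff `|⟨v, ξ⟩| ≤ |Sξ|` for all `ξ`.
Such a `v` is orthogonal to `ker S`, hence equals `S w` for some `w ∈ (ker S)ᗮ = range S`, and
`|w| ≤ 1` because `|w|² = ⟨Sη, w⟩ = ⟨η, v⟩ ≤ |Sη| = |w|` for `w = Sη`. With `S wᵢ = sᵢ` and
`S w'ᵢ = tᵢ` one takes `Ã(z, ξ) = Sξ − z Σ Gᵢ wᵢ + Σ gᵢ w'ᵢ`. The bounds then follow from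
`Σ |cᵢ| ≤ √n |c|` and, for the lower bound on `ξ · A`, from `ab ≤ a²/4 + b²`.
-/

open Matrix

noncomputable def euclNorm {n : ℕ} (x : Fin n → ℝ) : ℝ := Real.sqrt (x ⬝ᵥ x)

noncomputable def Matrix.PosSemidef.sqrt {m : Type*} [Fintype m] [DecidableEq m]
    {M : Matrix m m ℝ} (hM : M.PosSemidef) : Matrix m m ℝ :=
  (hM.isHermitian.eigenvectorUnitary : Matrix m m ℝ) *
    diagonal ((↑) ∘ Real.sqrt ∘ hM.isHermitian.eigenvalues) *
    (star hM.isHermitian.eigenvectorUnitary : Matrix m m ℝ)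

open scoped RealInnerProductSpace

theorem LinearMap.IsSymmetric.exists_apply_eq_norm_le_one {E : Type*} [NormedAddCommGroup E]
    [InnerProductSpace ℝ E] [FiniteDimensional ℝ E] {T : E →ₗ[ℝ] E} (hT : T.IsSymmetric)
    {v : E} (hv : ∀ x, |⟪v, x⟫| ≤ ‖T x‖) : ∃ w, T w = v ∧ ‖w‖ ≤ 1 := by
  have hv_ker : v ∈ (LinearMap.ker T)ᗮ := fun u hu => by
    have := hv u
    rwa [LinearMap.mem_ker.mp hu, norm_zero, abs_nonpos_iff, real_inner_comm] at this
  rw [← hT.orthogonal_range, Submodule.orthogonal_orthogonal] at hv_ker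
  obtain ⟨w', rfl⟩ := hv_ker
  obtain ⟨w, ⟨η, rfl⟩, u, hu, rfl⟩ := (LinearMap.range T).exists_add_mem_mem_orthogonal w'
  rw [hT.orthogonal_range] at hu
  have hTw : T (T η + u) = T (T η) := by rw [map_add, LinearMap.mem_ker.mp hu, add_zero]
  have hsq : ‖T η‖ ^ 2 ≤ ‖T η‖ :=
    calc ‖T η‖ ^ 2 = ⟪η, T (T η + u)⟫ := by rw [hTw, ← hT, real_inner_self_eq_norm_sq]
      _ ≤ ‖T η‖ := by rw [real_inner_comm]; exact (le_abs_self _).trans (hv η)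
  exact ⟨T η, hTw.symm, by nlinarith [norm_nonneg (T η)]⟩

section Sqrt

variable {m : Type*} [Fintype m] [DecidableEq m] {M : Matrix m m ℝ}

lemma Matrix.PosSemidef.isHermitian_sqrt (hM : M.PosSemidef) : hM.sqrt.IsHermitian := by
  unfold IsHermitian Matrix.PosSemidef.sqrt
  rw [conjTranspose_mul, conjTranspose_mul, diagonal_conjTranspose, ← star_eq_conjTranspose,
    star_star, ← star_eq_conjTranspose, star_trivial, Matrix.mul_assoc]

lemma Matrix.PosSemidef.sqrt_mul_sqrt (hM : M.PosSemidef) : hM.sqrt * hM.sqrt = M := by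
  conv_rhs => rw [hM.isHermitian.spectral_theorem, Unitary.conjStarAlgAut_apply]
  have hU : (star hM.isHermitian.eigenvectorUnitary : Matrix m m ℝ) *
      (hM.isHermitian.eigenvectorUnitary : Matrix m m ℝ) = 1 :=
    Unitary.coe_star_mul_self _
  unfold Matrix.PosSemidef.sqrt
  simp only [Matrix.mul_assoc]
  rw [← Matrix.mul_assoc _ (hM.isHermitian.eigenvectorUnitary : Matrix m m ℝ), hU,
    Matrix.one_mul, ← Matrix.mul_assoc (diagonal _), diagonal_mul_diagonal]
  congr 3; funext i
  simp [Real.mul_self_sqrt (hM.eigenvalues_nonneg i)]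

lemma Matrix.PosSemidef.mulVec_dotProduct_self (hM : M.PosSemidef) (x : m → ℝ) :
    M *ᵥ x ⬝ᵥ x = hM.sqrt *ᵥ x ⬝ᵥ hM.sqrt *ᵥ x := by
  have hS : hM.sqrtᵀ = hM.sqrt := by
    rw [← conjTranspose_eq_transpose_of_trivial, hM.isHermitian_sqrt.eq]
  conv_lhs => rw [← hM.sqrt_mul_sqrt, ← mulVec_mulVec, dotProduct_comm, dotProduct_mulVec,
    ← mulVec_transpose, hS]

end Sqrt

section Euclidean

variable {n : ℕ}

lemma euclNorm_eq_norm (x : Fin n → ℝ) : euclNorm x = ‖WithLp.toLp 2 x‖ := by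
  rw [EuclideanSpace.norm_eq, euclNorm, dotProduct]
  simp [sq]

lemma euclNorm_nonneg (x : Fin n → ℝ) : 0 ≤ euclNorm x := Real.sqrt_nonneg _

lemma euclNorm_sq (x : Fin n → ℝ) : euclNorm x ^ 2 = x ⬝ᵥ x :=
  Real.sq_sqrt (Finset.sum_nonneg fun i _ => mul_self_nonneg (x i))

lemma sum_abs_le_sqrt_mul_euclNorm (c : Fin n → ℝ) : ∑ i, |c i| ≤ √n * euclNorm c := by
  rw [euclNorm, ← Real.sqrt_mul (Nat.cast_nonneg n)]
  refine Real.le_sqrt_of_sq_le ?_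
  calc (∑ i, |c i|) ^ 2 ≤ n * ∑ i, |c i| ^ 2 := by
        simpa using sq_sum_le_card_mul_sum_sq (s := Finset.univ) (f := fun i => |c i|)
    _ = n * (c ⬝ᵥ c) := by simp [dotProduct, sq]

lemma abs_sum_mul_le_sqrt_mul_euclNorm (c a : Fin n → ℝ) {X : ℝ} (hX : 0 ≤ X)
    (ha : ∀ i, |a i| ≤ X) : |∑ i, c i * a i| ≤ √n * euclNorm c * X :=
  calc |∑ i, c i * a i| ≤ ∑ i, |c i| * X := by
        refine (Finset.abs_sum_le_sum_abs _ _).trans (Finset.sum_le_sum fun i _ => ?_)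
        rw [abs_mul]
        exact mul_le_mul_of_nonneg_left (ha i) (abs_nonneg _)
    _ ≤ √n * euclNorm c * X := by
        rw [← Finset.sum_mul]
        exact mul_le_mul_of_nonneg_right (sum_abs_le_sqrt_mul_euclNorm c) hX

lemma euclNorm_sum_smul_le (c : Fin n → ℝ) (w : Fin n → Fin n → ℝ)
    (hw : ∀ i, euclNorm (w i) ≤ 1) : euclNorm (∑ i, c i • w i) ≤ √n * euclNorm c :=
  calc euclNorm (∑ i, c i • w i) ≤ ∑ i, |c i| := by
        simp only [euclNorm_eq_norm, WithLp.toLp_sum, WithLp.toLp_smul]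
        refine (norm_sum_le _ _).trans (Finset.sum_le_sum fun i _ => ?_)
        rw [norm_smul, Real.norm_eq_abs, ← euclNorm_eq_norm]
        exact mul_le_of_le_one_right (abs_nonneg _) (hw i)
    _ ≤ √n * euclNorm c := sum_abs_le_sqrt_mul_euclNorm c

lemma euclNorm_sub_smul_add_le (x y u : Fin n → ℝ) (z : ℝ) :
    euclNorm (x - z • y + u) ≤ euclNorm x + euclNorm y * |z| + euclNorm u := by
  simp only [euclNorm_eq_norm, WithLp.toLp_add, WithLp.toLp_sub, WithLp.toLp_smul]
  calc _ ≤ ‖WithLp.toLp 2 x‖ + ‖z • WithLp.toLp 2 y‖ + ‖WithLp.toLp 2 u‖ :=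
        (norm_add_le _ _).trans (add_le_add_left (norm_sub_le _ _) _)
    _ = _ := by rw [norm_smul, Real.norm_eq_abs, mul_comm]

end Euclidean

def IsSubunit {m : Type*} [Fintype m] (Q : Matrix m m ℝ) (v : m → ℝ) : Prop :=
  ∀ ξ, (v ⬝ᵥ ξ) ^ 2 ≤ Q *ᵥ ξ ⬝ᵥ ξ

namespace IsSubunit

variable {n : ℕ} {Q : Matrix (Fin n) (Fin n) ℝ}

lemma abs_dotProduct_le (hQ : Q.PosSemidef) {v : Fin n → ℝ} (hv : IsSubunit Q v)
    (ξ : Fin n → ℝ) : |v ⬝ᵥ ξ| ≤ euclNorm (hQ.sqrt *ᵥ ξ) := by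
  rw [euclNorm, ← hQ.mulVec_dotProduct_self]
  exact Real.abs_le_sqrt (hv ξ)

lemma exists_sqrt_mulVec_eq (hQ : Q.PosSemidef) {v : Fin n → ℝ} (hv : IsSubunit Q v) :
    ∃ w, hQ.sqrt *ᵥ w = v ∧ euclNorm w ≤ 1 := by
  have hT := isSymmetric_toEuclideanLin_iff.mpr hQ.isHermitian_sqrt
  obtain ⟨w, hSw, hw⟩ := hT.exists_apply_eq_norm_le_one (v := WithLp.toLp 2 v) fun x => by
    rw [← WithLp.toLp_ofLp 2 x, EuclideanSpace.inner_toLp_toLp, star_trivial, dotProduct_comm]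
    exact (hv.abs_dotProduct_le hQ _).trans_eq (euclNorm_eq_norm _)
  exact ⟨WithLp.ofLp w, congrArg WithLp.ofLp hSw, by rwa [euclNorm_eq_norm]⟩

lemma abs_sum_mul_dotProduct_le (hQ : Q.PosSemidef) {u : Fin n → Fin n → ℝ}
    (hu : ∀ i, IsSubunit Q (u i)) (c ξ : Fin n → ℝ) :
    |∑ i, c i * (u i ⬝ᵥ ξ)| ≤ √n * euclNorm c * euclNorm (hQ.sqrt *ᵥ ξ) :=
  abs_sum_mul_le_sqrt_mul_euclNorm c _ (euclNorm_nonneg _) fun i =>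
    (hu i).abs_dotProduct_le hQ ξ

end IsSubunit

lemma half_sq_sub_le_of_abs_le {X a b z u v : ℝ} (hu : |u| ≤ a * X) (hv : |v| ≤ b * X) :
    X ^ 2 / 2 - a ^ 2 * z ^ 2 - b ^ 2 ≤ X ^ 2 - z * u + v := by
  have hzu : z * u ≤ |z| * (a * X) :=
    (le_abs_self _).trans (abs_mul z u ▸ mul_le_mul_of_nonneg_left hu (abs_nonneg z))
  nlinarith [neg_le_abs v, sq_nonneg (X - 2 * a * |z|), sq_nonneg (X - 2 * b), sq_abs z]

/-- For a symmetric positive semidefinite matrix `Q`, subunit vectors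
`rᵢ, sᵢ, tᵢ`, and data `H, G, g ∈ ℝⁿ`, `F, f ∈ ℝ`, the functions
`A(z,ξ) = Qξ − z Σᵢ Gᵢ sᵢ + Σᵢ gᵢ tᵢ` and `B(z,ξ) = f − Σᵢ Hᵢ⟨rᵢ,ξ⟩ − Fz` coming from the
linear equation satisfy the structural conditions with `p = γ = ψ = δ = 2` relative to `Q`. -/
theorem stmt14 {n : ℕ} (Q : Matrix (Fin n) (Fin n) ℝ) (hQ : Q.PosSemidef)
    (r s t : Fin n → (Fin n → ℝ))
    (hr : ∀ i, ∀ ξ : Fin n → ℝ, (r i ⬝ᵥ ξ) ^ 2 ≤ Q.mulVec ξ ⬝ᵥ ξ)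
    (hs : ∀ i, ∀ ξ : Fin n → ℝ, (s i ⬝ᵥ ξ) ^ 2 ≤ Q.mulVec ξ ⬝ᵥ ξ)
    (ht : ∀ i, ∀ ξ : Fin n → ℝ, (t i ⬝ᵥ ξ) ^ 2 ≤ Q.mulVec ξ ⬝ᵥ ξ)
    (H G g : Fin n → ℝ) (F f : ℝ)
    (A : ℝ → (Fin n → ℝ) → (Fin n → ℝ)) (B : ℝ → (Fin n → ℝ) → ℝ)
    (hA : ∀ (z : ℝ) (ξ : Fin n → ℝ),
      A z ξ = Q.mulVec ξ - z • (∑ i, G i • s i) + ∑ i, g i • t i)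
    (hB : ∀ (z : ℝ) (ξ : Fin n → ℝ),
      B z ξ = f - (∑ i, H i * (r i ⬝ᵥ ξ)) - F * z) :
    ∃ Atil : ℝ → (Fin n → ℝ) → (Fin n → ℝ),
      ∀ (z : ℝ) (ξ : Fin n → ℝ),
        A z ξ = hQ.sqrt.mulVec (Atil z ξ) ∧
        (1 / 2) * euclNorm (hQ.sqrt.mulVec ξ) ^ 2 - 4 * n * euclNorm G ^ 2 * z ^ 2 -
            4 * n * euclNorm g ^ 2 ≤ ξ ⬝ᵥ A z ξ ∧
        euclNorm (Atil z ξ) ≤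
          euclNorm (hQ.sqrt.mulVec ξ) + Real.sqrt n * euclNorm G * |z| +
            Real.sqrt n * euclNorm g ∧
        |B z ξ| ≤ Real.sqrt n * euclNorm H * euclNorm (hQ.sqrt.mulVec ξ) +
            |F| * |z| + |f| := by
  set S := hQ.sqrt
  choose ws hSws hws using fun i => IsSubunit.exists_sqrt_mulVec_eq hQ (hs i)
  choose wt hSwt hwt using fun i => IsSubunit.exists_sqrt_mulVec_eq hQ (ht i)
  refine ⟨fun z ξ => S *ᵥ ξ - z • ∑ i, G i • ws i + ∑ i, g i • wt i,
    fun z ξ => ⟨?_, ?_, ?_, ?_⟩⟩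
  · simp only [hA, mulVec_add, mulVec_sub, mulVec_smul, mulVec_sum, hSws, hSwt, mulVec_mulVec,
      S, hQ.sqrt_mul_sqrt]
  · have hξA : ξ ⬝ᵥ A z ξ = euclNorm (S *ᵥ ξ) ^ 2 - z * ∑ i, G i * (s i ⬝ᵥ ξ) +
        ∑ i, g i * (t i ⬝ᵥ ξ) := by
      rw [hA, euclNorm_sq, ← hQ.mulVec_dotProduct_self, dotProduct_comm ξ]
      simp only [add_dotProduct, sub_dotProduct, smul_dotProduct, sum_dotProduct, smul_eq_mul]
    have hlower := half_sq_sub_le_of_abs_le (z := z) (IsSubunit.abs_sum_mul_dotProduct_le hQ hs G ξ)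
      (IsSubunit.abs_sum_mul_dotProduct_le hQ ht g ξ)
    rw [mul_pow, mul_pow, Real.sq_sqrt (Nat.cast_nonneg n)] at hlower
    rw [hξA]
    have hGz : 0 ≤ (n : ℝ) * euclNorm G ^ 2 * z ^ 2 := by positivity
    have hg : 0 ≤ (n : ℝ) * euclNorm g ^ 2 := by positivity
    linarith
  · calc _ ≤ euclNorm (S *ᵥ ξ) + euclNorm (∑ i, G i • ws i) * |z| +
            euclNorm (∑ i, g i • wt i) := euclNorm_sub_smul_add_le _ _ _ _
      _ ≤ _ := by gcongr; exacts [euclNorm_sum_smul_le G ws hws, euclNorm_sum_smul_le g wt hwt]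
  · have hH := IsSubunit.abs_sum_mul_dotProduct_le hQ hr H ξ
    calc |B z ξ| ≤ |f| + |∑ i, H i * (r i ⬝ᵥ ξ)| + |F| * |z| := by
          rw [hB, ← abs_mul]
          exact (abs_sub _ _).trans (add_le_add_left (abs_sub _ _) _)
      _ ≤ _ := by linarith
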